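/- arXiv:2409.20421 — 2 statements merged into one kernel-verified Lean document; each statement's English description precedes it below -/
import Mathlib

section
/- Let $(\Omega, \mathcal{F}, (\mathcal{F}_t)_{t\geq0}, \mathbb{P})$ be a filtered probability space with complete right-continuous filtration, and let $M$ be a nonnegative random variable. Consider the set $\mathfrak{D}$ of adapted processes with increasing cadlag paths in $[0,\infty)$ bounded above by $M$, with partial order $s \leq \tilde{s}$ iff $\mathbb{P}(s(r) \leq \tilde{s}(r) \text{ for all } r \in \mathbb{Q}_+) = 1$. Then $\mathfrak{D}$ is a complete lattice: every subset $S \subseteq \mathfrak{D}$ has a least upper bound and a greatest lower bound in $\mathfrak{D}$. -/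
open MeasureTheory
open scoped NNReal NNRat

lemma exists_essSup_family {Ω : Type*} [mΩ : MeasurableSpace Ω] (μ : Measure Ω)
    [IsProbabilityMeasure μ] {m : MeasurableSpace Ω} (hm : m ≤ mΩ)
    (B : Ω → ℝ) (hB : ∀ ω, 0 ≤ B ω) (F : Set (Ω → ℝ))
    (hmeas : ∀ f ∈ F, Measurable[m] f)
    (hbd : ∀ f ∈ F, ∀ ω, 0 ≤ f ω ∧ f ω ≤ B ω) :
    ∃ g : Ω → ℝ, Measurable[m] g ∧ (∀ ω, 0 ≤ g ω ∧ g ω ≤ B ω) ∧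
      (∀ f ∈ F, f ≤ᵐ[μ] g) ∧
      (∀ b : Ω → ℝ, (∀ ω, 0 ≤ b ω) → (∀ f ∈ F, f ≤ᵐ[μ] b) → g ≤ᵐ[μ] b) := by
  classical
  set F' : Set (Ω → ℝ) := insert (fun _ => (0:ℝ)) F with hF'
  have hmeas' : ∀ f ∈ F', Measurable[m] f := by
    rintro f (rfl | hf)
    · exact measurable_const
    · exact hmeas f hf
  have hbd' : ∀ f ∈ F', ∀ ω, 0 ≤ f ω ∧ f ω ≤ B ω := by
    rintro f (rfl | hf) ω
    · exact ⟨le_rfl, hB ω⟩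
    · exact hbd f hf ω
  set SupE : (ℕ → Ω → ℝ) → Ω → ℝ := fun e ω => ⨆ n, e n ω with hSupE
  have bddE : ∀ (e : ℕ → Ω → ℝ), (∀ n, e n ∈ F') → ∀ ω,
      BddAbove (Set.range fun n => e n ω) := by
    intro e he ω
    exact ⟨B ω, by rintro x ⟨n, rfl⟩; exact (hbd' _ (he n) ω).2⟩
  have SupE_bounds : ∀ (e : ℕ → Ω → ℝ), (∀ n, e n ∈ F') → ∀ ω,
      0 ≤ SupE e ω ∧ SupE e ω ≤ B ω := by
    intro e he ω
    constructor
    · exact le_trans (hbd' _ (he 0) ω).1 (le_ciSup (bddE e he ω) 0)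
    · exact ciSup_le fun n => (hbd' _ (he n) ω).2
  have SupE_meas : ∀ (e : ℕ → Ω → ℝ), (∀ n, e n ∈ F') → Measurable[m] (SupE e) :=
    fun e he => Measurable.iSup (fun n => hmeas' _ (he n))
  -- the functional
  set I : (Ω → ℝ) → ℝ := fun h => ∫ ω, Real.arctan (h ω) ∂μ with hI
  have int_arctan : ∀ h : Ω → ℝ, Measurable[m] h →
      Integrable (fun ω => Real.arctan (h ω)) μ := by
    intro h hh
    have hmm : Measurable[mΩ] fun ω => Real.arctan (h ω) :=
      Real.continuous_arctan.measurable.comp (hh.mono hm le_rfl)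
    refine (integrable_const (Real.pi/2)).mono' hmm.aestronglyMeasurable ?_
    refine Filter.Eventually.of_forall fun ω => ?_
    rw [Real.norm_eq_abs, abs_le]
    have h1 := Real.arctan_mem_Ioo (h ω)
    exact ⟨h1.1.le, h1.2.le⟩
  have I_mono : ∀ h h' : Ω → ℝ, Measurable[m] h → Measurable[m] h' →
      (∀ ω, h ω ≤ h' ω) → I h ≤ I h' := by
    intro h h' hh hh' hle
    exact integral_mono (int_arctan h hh) (int_arctan h' hh')
      (fun ω => Real.arctan_strictMono.monotone (hle ω))
  set A : Set ℝ := {x | ∃ e : ℕ → Ω → ℝ, (∀ n, e n ∈ F') ∧ x = I (SupE e)} with hA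
  have hAne : A.Nonempty :=
    ⟨_, fun _ => fun _ => (0:ℝ), fun _ => Set.mem_insert _ _, rfl⟩
  have hAbdd : BddAbove A := by
    refine ⟨Real.pi/2, ?_⟩
    rintro x ⟨e, he, rfl⟩
    calc I (SupE e) ≤ ∫ _, Real.pi/2 ∂μ :=
          integral_mono (int_arctan _ (SupE_meas e he)) (integrable_const _)
            (fun ω => (Real.arctan_lt_pi_div_two _).le)
      _ = Real.pi/2 := by simp
  set c := sSup A with hc
  have h1 : ∀ j : ℕ, ∃ e : ℕ → Ω → ℝ, (∀ n, e n ∈ F') ∧ c - 1/(j+1) < I (SupE e) := by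
    intro j
    have : c - 1/(j+1) < c := by
      have : (0:ℝ) < 1/(j+1) := by positivity
      linarith
    obtain ⟨x, hx, hlt⟩ := exists_lt_of_lt_csSup hAne this
    obtain ⟨e, he, rfl⟩ := hx
    exact ⟨e, he, hlt⟩
  choose E hE1 hE2 using h1
  set e' : ℕ → Ω → ℝ := fun n => E (Nat.unpair n).1 (Nat.unpair n).2 with he'def
  have he' : ∀ n, e' n ∈ F' := fun n => hE1 _ _
  set g := SupE e' with hg
  have hgmeas : Measurable[m] g := SupE_meas e' he'
  have hgbd : ∀ ω, 0 ≤ g ω ∧ g ω ≤ B ω := SupE_bounds e' he'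
  have hEg : ∀ j, ∀ ω, SupE (E j) ω ≤ g ω := by
    intro j ω
    refine ciSup_le fun n => ?_
    have : E j n ω = e' (Nat.pair j n) ω := by simp [he'def]
    rw [this]
    exact le_ciSup (bddE e' he' ω) _
  have hIg_le : I g ≤ c := le_csSup hAbdd ⟨e', he', rfl⟩
  have hIg_ge : c ≤ I g := by
    refine le_of_forall_pos_le_add fun ε hε => ?_
    obtain ⟨j, hj⟩ := exists_nat_one_div_lt hε
    have h2 := hE2 j
    have h3 : I (SupE (E j)) ≤ I g :=
      I_mono _ _ (SupE_meas _ (hE1 j)) hgmeas (hEg j)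
    have : (1:ℝ)/(j+1) < ε := by exact_mod_cast hj
    linarith
  have hIg : I g = c := le_antisymm hIg_le hIg_ge
  refine ⟨g, hgmeas, hgbd, ?_, ?_⟩
  · -- each f ∈ F is a.e. ≤ g
    intro f hf
    set e'' : ℕ → Ω → ℝ := fun n => Nat.rec f (fun k _ => e' k) n with he''def
    have he'' : ∀ n, e'' n ∈ F' := by
      intro n; cases n with
      | zero => exact Set.mem_insert_iff.2 (Or.inr hf)
      | succ k => exact he' k
    have hmax : ∀ ω, SupE e'' ω = max (f ω) (g ω) := by
      intro ω
      refine le_antisymm (ciSup_le fun n => ?_) (max_le ?_ (ciSup_le fun n => ?_))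
      · cases n with
        | zero => exact le_max_left _ _
        | succ k => exact le_trans (le_ciSup (bddE e' he' ω) k) (le_max_right _ _)
      · exact le_ciSup (bddE e'' he'' ω) 0
      · exact le_ciSup (bddE e'' he'' ω) (n+1)
    have hI1 : I (SupE e'') ≤ I g := by
      rw [hIg]; exact le_csSup hAbdd ⟨e'', he'', rfl⟩
    have hI2 : I g ≤ I (SupE e'') := by
      refine I_mono _ _ hgmeas (SupE_meas _ he'') fun ω => ?_
      rw [hmax]; exact le_max_right _ _
    -- integral of nonneg difference is zero
    have hdiff : (fun ω => Real.arctan (SupE e'' ω) - Real.arctan (g ω)) =ᵐ[μ] 0 := by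
      rw [← integral_eq_zero_iff_of_nonneg]
      · have := integral_sub (int_arctan _ (SupE_meas _ he'')) (int_arctan _ hgmeas)
        rw [this]
        have : I (SupE e'') = I g := le_antisymm hI1 hI2
        simp only [hI] at this
        linarith [this]
      · intro ω
        simp only [Pi.zero_apply, sub_nonneg]
        refine Real.arctan_strictMono.monotone ?_
        rw [hmax]; exact le_max_right _ _
      · exact (int_arctan _ (SupE_meas _ he'')).sub (int_arctan _ hgmeas)
    filter_upwards [hdiff] with ω hω
    have : Real.arctan (SupE e'' ω) = Real.arctan (g ω) := by
      simp only [Pi.zero_apply] at hω; linarith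
    have h5 : SupE e'' ω = g ω := Real.arctan_injective this
    rw [hmax] at h5
    calc f ω ≤ max (f ω) (g ω) := le_max_left _ _
      _ = g ω := h5
  · -- minimality
    intro b hb0 hub
    have : ∀ n, e' n ≤ᵐ[μ] b := by
      intro n
      rcases he' n with h | h
      · rw [show e' n = (fun _ => (0:ℝ)) from h]
        exact Filter.Eventually.of_forall fun ω => hb0 ω
      · exact hub _ h
    filter_upwards [ae_all_iff.2 this] with ω hω
    exact ciSup_le fun n => hω n


lemma coe_toNNRat' (q : ℚ) (hq : 0 ≤ q) : ((q.toNNRat : ℚ≥0) : ℝ≥0) = Real.toNNReal (q:ℝ) := by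
  ext
  rw [Real.coe_toNNReal _ (by exact_mod_cast hq)]
  rw [show ((q.toNNRat : ℝ≥0) : ℝ) = ((q.toNNRat : ℚ) : ℝ) by
    rw [← Rat.cast_nnratCast]; rfl]
  exact_mod_cast Rat.coe_toNNRat q hq

lemma exists_nnrat_btwn' (a b : ℝ≥0) (h : a < b) : ∃ q : ℚ≥0, a < (q:ℝ≥0) ∧ (q:ℝ≥0) < b := by
  obtain ⟨q, hq0, h1, h2⟩ := (NNReal.lt_iff_exists_rat_btwn a b).1 h
  exact ⟨q.toNNRat, by rw [coe_toNNRat' _ hq0]; exact ⟨h1, h2⟩⟩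

lemma exists_nnrat_gt' (a : ℝ≥0) : ∃ q : ℚ≥0, a < (q:ℝ≥0) :=
  (exists_nnrat_btwn' a (a+1) (lt_add_of_pos_right _ one_pos)).imp fun _ h => h.1

lemma nnratCast_coe (q : ℚ≥0) : ((q:ℝ≥0):ℝ) = ((q:ℚ):ℝ) := by
  rw [Rat.cast_nnratCast]; rfl

instance : Countable ℚ≥0 := NNRat.coe_injective.countable

lemma nnratCast_le_iff {q q' : ℚ≥0} : (q:ℝ≥0) ≤ (q':ℝ≥0) ↔ q ≤ q' := by
  rw [← NNReal.coe_le_coe, nnratCast_coe, nnratCast_coe]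
  exact_mod_cast Iff.rfl

lemma exists_join {Ω : Type*} [mΩ : MeasurableSpace Ω] (μ : Measure Ω) [IsProbabilityMeasure μ]
    (ℱ : Filtration ℝ≥0 mΩ)
    (hcompl : ∀ (t : ℝ≥0) (A : Set Ω), μ A = 0 → MeasurableSet[ℱ t] A)
    (hright : ∀ t : ℝ≥0, ℱ t = ⨅ u ∈ Set.Ioi t, ℱ u)
    (M : Ω → ℝ) (hMnn : ∀ ω, 0 ≤ M ω)
    (T : Set (ℝ≥0 → Ω → ℝ))
    (hT : ∀ s ∈ T, Adapted ℱ s ∧ ∀ ω : Ω, Monotone (fun t => s t ω) ∧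
        (∀ t : ℝ≥0, ContinuousWithinAt (fun u => s u ω) (Set.Ici t) t) ∧
        ∀ t : ℝ≥0, 0 ≤ s t ω ∧ s t ω ≤ M ω) :
    ∃ j : ℝ≥0 → Ω → ℝ,
      (Adapted ℱ j ∧ ∀ ω : Ω, Monotone (fun t => j t ω) ∧
        (∀ t : ℝ≥0, ContinuousWithinAt (fun u => j u ω) (Set.Ici t) t) ∧
        ∀ t : ℝ≥0, 0 ≤ j t ω ∧ j t ω ≤ M ω) ∧
      (∀ s ∈ T, ∀ᵐ ω ∂μ, ∀ q : ℚ≥0, s (q:ℝ≥0) ω ≤ j (q:ℝ≥0) ω) ∧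
      (∀ u : ℝ≥0 → Ω → ℝ,
        (∀ ω : Ω, Monotone (fun t => u t ω)) →
        (∀ ω, ∀ t : ℝ≥0, ContinuousWithinAt (fun v => u v ω) (Set.Ici t) t) →
        (∀ ω, ∀ t : ℝ≥0, 0 ≤ u t ω) →
        (∀ s ∈ T, ∀ᵐ ω ∂μ, ∀ q : ℚ≥0, s (q:ℝ≥0) ω ≤ u (q:ℝ≥0) ω) →
        ∀ᵐ ω ∂μ, ∀ q : ℚ≥0, j (q:ℝ≥0) ω ≤ u (q:ℝ≥0) ω) := by
  classical
  -- essential suprema at rational times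
  have key : ∀ q : ℚ≥0, ∃ g : Ω → ℝ, Measurable[ℱ (q:ℝ≥0)] g ∧
      (∀ ω, 0 ≤ g ω ∧ g ω ≤ M ω) ∧
      (∀ s ∈ T, (fun ω => s (q:ℝ≥0) ω) ≤ᵐ[μ] g) ∧
      (∀ b : Ω → ℝ, (∀ ω, 0 ≤ b ω) →
        (∀ s ∈ T, (fun ω => s (q:ℝ≥0) ω) ≤ᵐ[μ] b) → g ≤ᵐ[μ] b) := by
    intro q
    obtain ⟨g, h1, h2, h3, h4⟩ := exists_essSup_family μ (ℱ.le (q:ℝ≥0)) M hMnn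
      ((fun s => s (q:ℝ≥0)) '' T)
      (by rintro f ⟨s, hs, rfl⟩; exact ((hT s hs).1 _))
      (by rintro f ⟨s, hs, rfl⟩ ω; exact ((hT s hs).2 ω).2.2 _)
    exact ⟨g, h1, h2, fun s hs => h3 _ ⟨s, hs, rfl⟩,
      fun b hb hub => h4 b hb (by rintro f ⟨s, hs, rfl⟩; exact hub s hs)⟩
  choose g hg1 hg2 hg3 hg4 using key
  -- a.e. monotonicity across rationals
  have hmono_ae : ∀ q q' : ℚ≥0, q ≤ q' → g q ≤ᵐ[μ] g q' := by
    intro q q' hqq'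
    refine hg4 q (g q') (fun ω => (hg2 q' ω).1) fun s hs => ?_
    filter_upwards [hg3 q' s hs] with ω hω
    exact le_trans (((hT s hs).2 ω).1 (nnratCast_le_iff.2 hqq')) hω
  -- the good set E
  set E : Set Ω := {ω | ∀ q q' : ℚ≥0, q ≤ q' → g q ω ≤ g q' ω} with hE
  have hEae : ∀ᵐ ω ∂μ, ω ∈ E := by
    have h : ∀ᵐ ω ∂μ, ∀ q : ℚ≥0, ∀ q' : ℚ≥0, q ≤ q' → g q ω ≤ g q' ω :=
      ae_all_iff.2 fun q => ae_all_iff.2 fun q' =>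
        (em (q ≤ q')).elim
          (fun h => (hmono_ae q q' h).mono fun ω hω _ => hω)
          (fun h => Filter.Eventually.of_forall fun ω hω => absurd hω h)
    exact h
  have hEc : μ Eᶜ = 0 := by
    rw [Set.compl_def]
    exact ae_iff.1 hEae
  have hEmeas : ∀ t : ℝ≥0, MeasurableSet[ℱ t] E := by
    intro t
    have := (hcompl t Eᶜ hEc).compl
    rwa [compl_compl] at this
  -- corrected versions
  set G : ℚ≥0 → Ω → ℝ := fun q => E.indicator (g q) with hG
  have hG1 : ∀ q : ℚ≥0, Measurable[ℱ (q:ℝ≥0)] (G q) :=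
    fun q => (hg1 q).indicator (hEmeas _)
  have hGmem : ∀ (q : ℚ≥0) (ω : Ω), ω ∈ E → G q ω = g q ω :=
    fun q ω h => Set.indicator_of_mem h _
  have hGnot : ∀ (q : ℚ≥0) (ω : Ω), ω ∉ E → G q ω = 0 :=
    fun q ω h => Set.indicator_of_notMem h _
  have hG2 : ∀ (q : ℚ≥0) ω, 0 ≤ G q ω ∧ G q ω ≤ M ω := by
    intro q ω
    rcases em (ω ∈ E) with h | h
    · rw [hGmem q ω h]; exact hg2 q ω
    · rw [hGnot q ω h]; exact ⟨le_rfl, hMnn ω⟩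
  have hGmono : ∀ ω, ∀ q q' : ℚ≥0, q ≤ q' → G q ω ≤ G q' ω := by
    intro ω q q' hqq'
    rcases em (ω ∈ E) with h | h
    · rw [hGmem q ω h, hGmem q' ω h]; exact h q q' hqq'
    · rw [hGnot q ω h, hGnot q' ω h]
  -- nonemptiness of rational indices above t
  haveI hne : ∀ t : ℝ≥0, Nonempty {q : ℚ≥0 // t < (q:ℝ≥0)} := by
    intro t
    obtain ⟨q, hq⟩ := exists_nnrat_gt' t
    exact ⟨⟨q, hq⟩⟩
  -- the join process
  set j : ℝ≥0 → Ω → ℝ := fun t ω => ⨅ q : {q : ℚ≥0 // t < (q:ℝ≥0)}, G q.1 ω with hj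
  have hbdd : ∀ (t : ℝ≥0) ω, BddBelow (Set.range fun q : {q : ℚ≥0 // t < (q:ℝ≥0)} => G q.1 ω) := by
    intro t ω
    exact ⟨0, by rintro x ⟨q, rfl⟩; exact (hG2 q.1 ω).1⟩
  have hj_le : ∀ (t : ℝ≥0) ω (q : ℚ≥0), t < (q:ℝ≥0) → j t ω ≤ G q ω := by
    intro t ω q hq
    exact ciInf_le (hbdd t ω) ⟨q, hq⟩
  have hj_ge : ∀ (t : ℝ≥0) ω (x : ℝ), (∀ q : ℚ≥0, t < (q:ℝ≥0) → x ≤ G q ω) → x ≤ j t ω := by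
    intro t ω x hx
    exact le_ciInf fun q => hx q.1 q.2
  have hj_bd : ∀ (t : ℝ≥0) ω, 0 ≤ j t ω ∧ j t ω ≤ M ω := by
    intro t ω
    constructor
    · exact hj_ge t ω 0 fun q _ => (hG2 q ω).1
    · obtain ⟨q, hq⟩ := exists_nnrat_gt' t
      exact le_trans (hj_le t ω q hq) (hG2 q ω).2
  have hj_mono : ∀ ω, Monotone fun t => j t ω := by
    intro ω t t' htt'
    exact hj_ge t' ω (j t ω) fun q hq => hj_le t ω q (lt_of_le_of_lt htt' hq)
  -- measurability
  have hj_meas_gt : ∀ t u : ℝ≥0, t < u → Measurable[ℱ u] (j t) := by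
    intro t u htu
    haveI : Nonempty {q : ℚ≥0 // t < (q:ℝ≥0) ∧ (q:ℝ≥0) < u} := by
      obtain ⟨r, hr1, hr2⟩ := exists_nnrat_btwn' t u htu
      exact ⟨⟨r, hr1, hr2⟩⟩
    have hrw : j t = fun ω => ⨅ q : {q : ℚ≥0 // t < (q:ℝ≥0) ∧ (q:ℝ≥0) < u}, G q.1 ω := by
      funext ω
      refine le_antisymm ?_ ?_
      · refine le_ciInf fun q => hj_le t ω q.1 q.2.1
      · refine hj_ge t ω _ fun q hq => ?_
        obtain ⟨r, hr1, hr2⟩ := exists_nnrat_btwn' t (min u (q:ℝ≥0))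
          (lt_min htu hq)
        have hrq : r ≤ q := nnratCast_le_iff.1 (le_of_lt (lt_of_lt_of_le hr2 (min_le_right _ _)))
        have hru : (r:ℝ≥0) < u := lt_of_lt_of_le hr2 (min_le_left _ _)
        calc (⨅ q : {q : ℚ≥0 // t < (q:ℝ≥0) ∧ (q:ℝ≥0) < u}, G q.1 ω)
            ≤ G r ω := ciInf_le (f := fun q : {q : ℚ≥0 // t < (q:ℝ≥0) ∧ (q:ℝ≥0) < u} => G q.1 ω) ⟨0, by rintro x ⟨p, rfl⟩; exact (hG2 p.1 ω).1⟩ ⟨r, hr1, hru⟩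
          _ ≤ G q ω := hGmono ω r q hrq
    rw [hrw]
    refine Measurable.iInf fun q => ?_
    exact (hG1 q.1).mono (ℱ.mono (le_of_lt q.2.2)) le_rfl
  have hj_adapted : Adapted ℱ j := by
    intro t
    have : Measurable[⨅ u ∈ Set.Ioi t, ℱ u] (j t) := by
      intro s hs
      rw [MeasurableSpace.measurableSet_iInf]
      intro u
      rw [MeasurableSpace.measurableSet_iInf]
      intro hu
      exact hj_meas_gt t u hu hs
    rwa [← hright t] at this
  -- right continuity
  have hj_rc : ∀ ω, ∀ t : ℝ≥0, ContinuousWithinAt (fun u => j u ω) (Set.Ici t) t := by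
    intro ω t
    rw [Metric.continuousWithinAt_iff]
    intro ε hε
    have h1 : j t ω < j t ω + ε := lt_add_of_pos_right _ hε
    have h2 : (⨅ q : {q : ℚ≥0 // t < (q:ℝ≥0)}, G q.1 ω) < j t ω + ε := h1
    obtain ⟨⟨q, hq⟩, hq2⟩ := exists_lt_of_ciInf_lt h2
    refine ⟨((q:ℝ≥0):ℝ) - (t:ℝ), by simp [sub_pos]; exact_mod_cast hq, ?_⟩
    intro x hx hdist
    have hxt : t ≤ x := hx
    have hxq : x < (q:ℝ≥0) := by
      rw [NNReal.dist_eq, abs_of_nonneg (by simp [hxt] : (0:ℝ) ≤ (x:ℝ) - t)] at hdist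
      have : (x:ℝ) < ((q:ℝ≥0):ℝ) := by linarith
      exact_mod_cast this
    have hle1 : j x ω ≤ G q ω := hj_le x ω q hxq
    have hle2 : j t ω ≤ j x ω := hj_mono ω hxt
    rw [Real.dist_eq, abs_of_nonneg (by linarith)]
    have : j x ω < j t ω + ε := lt_of_le_of_lt hle1 hq2
    linarith
  refine ⟨j, ⟨hj_adapted, fun ω => ⟨hj_mono ω, hj_rc ω, fun t => hj_bd t ω⟩⟩, ?_, ?_⟩
  · -- upper bound
    intro s hs
    filter_upwards [hEae, ae_all_iff.2 fun q : ℚ≥0 => hg3 q s hs] with ω hωE hωs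
    intro q
    refine hj_ge (q:ℝ≥0) ω _ fun q' hq' => ?_
    have h1 : s (q:ℝ≥0) ω ≤ s (q':ℝ≥0) ω := ((hT s hs).2 ω).1 (le_of_lt hq')
    have h2 : s (q':ℝ≥0) ω ≤ g q' ω := hωs q'
    have h3 : g q' ω = G q' ω := (hGmem q' ω hωE).symm
    linarith
  · -- leastness
    intro u hu_mono hu_rc hu_nn hub
    have h6 : ∀ q : ℚ≥0, g q ≤ᵐ[μ] fun ω => u (q:ℝ≥0) ω := by
      intro q
      refine hg4 q _ (fun ω => hu_nn ω _) fun s hs => ?_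
      filter_upwards [hub s hs] with ω hω using hω q
    filter_upwards [hEae, ae_all_iff.2 h6] with ω hωE hωu
    intro q
    by_contra hlt
    push_neg at hlt
    set ε := j (q:ℝ≥0) ω - u (q:ℝ≥0) ω with hεdef
    have hε : 0 < ε := by simp [hεdef]; linarith
    obtain ⟨δ, hδ, hδ2⟩ := Metric.continuousWithinAt_iff.1 (hu_rc ω (q:ℝ≥0)) ε hε
    obtain ⟨q', hq'1, hq'2⟩ := exists_nnrat_btwn' (q:ℝ≥0) ((q:ℝ≥0) + Real.toNNReal δ)
      (lt_add_of_pos_right _ (by simp [Real.toNNReal_pos]; exact hδ))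
    have hdist : dist ((q':ℝ≥0)) ((q:ℝ≥0)) < δ := by
      rw [NNReal.dist_eq, abs_of_nonneg (by simp [le_of_lt hq'1] : (0:ℝ) ≤ ((q':ℝ≥0):ℝ) - ((q:ℝ≥0):ℝ))]
      have h7 : ((q':ℝ≥0):ℝ) < ((q:ℝ≥0):ℝ) + δ := by
        have := hq'2
        have h8 : (((q:ℝ≥0) + Real.toNNReal δ : ℝ≥0) : ℝ) = ((q:ℝ≥0):ℝ) + δ := by
          rw [NNReal.coe_add, Real.coe_toNNReal _ (le_of_lt hδ)]
        calc ((q':ℝ≥0):ℝ) < (((q:ℝ≥0) + Real.toNNReal δ : ℝ≥0) : ℝ) := by exact_mod_cast this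
          _ = ((q:ℝ≥0):ℝ) + δ := h8
      linarith
    have h9 := hδ2 (Set.mem_Ici.2 (le_of_lt hq'1)) hdist
    rw [Real.dist_eq] at h9
    have h10 : u ((q':ℝ≥0)) ω - u ((q:ℝ≥0)) ω < ε := lt_of_le_of_lt (le_abs_self _) h9
    have h11 : j (q:ℝ≥0) ω ≤ G q' ω := hj_le _ ω q' hq'1
    have h12 : G q' ω = g q' ω := hGmem q' ω hωE
    have h13 : g q' ω ≤ u ((q':ℝ≥0)) ω := hωu q'
    simp only [hεdef] at h10
    linarith


/-- The set of adapted processes with increasing cadlag paths in `[0,∞)`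
bounded above by a nonnegative random variable `M`, ordered by almost-sure
comparison at all nonnegative rational times, is a complete lattice: every
subset has a least upper bound and a greatest lower bound. -/
theorem stmt4 {Ω : Type*} [mΩ : MeasurableSpace Ω] (μ : Measure Ω) [IsProbabilityMeasure μ]
    (ℱ : Filtration ℝ≥0 mΩ)
    (hcompl : ∀ (t : ℝ≥0) (A : Set Ω), μ A = 0 → MeasurableSet[ℱ t] A)
    (hright : ∀ t : ℝ≥0, ℱ t = ⨅ u ∈ Set.Ioi t, ℱ u)
    (M : Ω → ℝ) (hMnn : ∀ ω, 0 ≤ M ω) (hMmeas : Measurable M)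
    (D : Set (ℝ≥0 → Ω → ℝ))
    (hD : D = {s | Adapted ℱ s ∧ ∀ ω : Ω,
        Monotone (fun t => s t ω) ∧
        (∀ t : ℝ≥0, ContinuousWithinAt (fun u => s u ω) (Set.Ici t) t) ∧
        ∀ t : ℝ≥0, 0 ≤ s t ω ∧ s t ω ≤ M ω})
    (le : (ℝ≥0 → Ω → ℝ) → (ℝ≥0 → Ω → ℝ) → Prop)
    (hle : le = fun s s' => μ {ω | ∀ q : ℚ≥0, s (q : ℝ≥0) ω ≤ s' (q : ℝ≥0) ω} = 1) :
    ∀ S ⊆ D,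
      (∃ j ∈ D, (∀ s ∈ S, le s j) ∧ ∀ u ∈ D, (∀ s ∈ S, le s u) → le j u) ∧
      (∃ m ∈ D, (∀ s ∈ S, le m s) ∧ ∀ u ∈ D, (∀ s ∈ S, le u s) → le u m) := by
  subst hD hle
  have hconv1 : ∀ a b : ℝ≥0 → Ω → ℝ,
      (∀ᵐ ω ∂μ, ∀ q : ℚ≥0, a (q:ℝ≥0) ω ≤ b (q:ℝ≥0) ω) →
      μ {ω | ∀ q : ℚ≥0, a (q:ℝ≥0) ω ≤ b (q:ℝ≥0) ω} = 1 := by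
    intro a b h
    have hc : μ {ω | ∀ q : ℚ≥0, a (q:ℝ≥0) ω ≤ b (q:ℝ≥0) ω}ᶜ = 0 := by
      rw [Set.compl_def]
      exact ae_iff.1 h
    refine le_antisymm prob_le_one ?_
    have h2 := measure_union_le (μ := μ) {ω | ∀ q : ℚ≥0, a (q:ℝ≥0) ω ≤ b (q:ℝ≥0) ω}
      {ω | ∀ q : ℚ≥0, a (q:ℝ≥0) ω ≤ b (q:ℝ≥0) ω}ᶜ
    rwa [Set.union_compl_self, hc, add_zero, measure_univ] at h2
  have hconv2 : ∀ a b : ℝ≥0 → Ω → ℝ, Adapted ℱ a → Adapted ℱ b →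
      μ {ω | ∀ q : ℚ≥0, a (q:ℝ≥0) ω ≤ b (q:ℝ≥0) ω} = 1 →
      ∀ᵐ ω ∂μ, ∀ q : ℚ≥0, a (q:ℝ≥0) ω ≤ b (q:ℝ≥0) ω := by
    intro a b ha hb h
    have hms : MeasurableSet {ω | ∀ q : ℚ≥0, a (q:ℝ≥0) ω ≤ b (q:ℝ≥0) ω} := by
      rw [Set.setOf_forall]
      refine MeasurableSet.iInter fun q => ?_
      exact measurableSet_le (((ha _)).mono (ℱ.le _) le_rfl)
        (((hb _)).mono (ℱ.le _) le_rfl)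
    rw [ae_iff]
    have heq : {ω | ¬ ∀ q : ℚ≥0, a (q:ℝ≥0) ω ≤ b (q:ℝ≥0) ω}
        = {ω | ∀ q : ℚ≥0, a (q:ℝ≥0) ω ≤ b (q:ℝ≥0) ω}ᶜ := rfl
    rw [heq, measure_compl hms (measure_ne_top μ _), h, measure_univ, tsub_self]
  set D : Set (ℝ≥0 → Ω → ℝ) := {s | Adapted ℱ s ∧ ∀ ω : Ω,
      Monotone (fun t => s t ω) ∧
      (∀ t : ℝ≥0, ContinuousWithinAt (fun u => s u ω) (Set.Ici t) t) ∧
      ∀ t : ℝ≥0, 0 ≤ s t ω ∧ s t ω ≤ M ω} with hD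
  have key : ∀ T ⊆ D, ∃ j ∈ D,
      (∀ s ∈ T, μ {ω | ∀ q : ℚ≥0, s (q:ℝ≥0) ω ≤ j (q:ℝ≥0) ω} = 1) ∧
      ∀ u ∈ D, (∀ s ∈ T, μ {ω | ∀ q : ℚ≥0, s (q:ℝ≥0) ω ≤ u (q:ℝ≥0) ω} = 1) →
        μ {ω | ∀ q : ℚ≥0, j (q:ℝ≥0) ω ≤ u (q:ℝ≥0) ω} = 1 := by
    intro T hTD
    obtain ⟨j, hjD, hjub, hjleast⟩ := exists_join μ ℱ hcompl hright M hMnn T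
      (fun s hs => hTD hs)
    refine ⟨j, hjD, fun s hs => hconv1 _ _ (hjub s hs), ?_⟩
    intro u huD hub
    refine hconv1 _ _ (hjleast u (fun ω => (huD.2 ω).1) (fun ω t => (huD.2 ω).2.1 t)
      (fun ω t => ((huD.2 ω).2.2 t).1) ?_)
    intro s hs
    exact hconv2 s u (hTD hs).1 huD.1 (hub s hs)
  intro S hSD
  constructor
  · obtain ⟨j, hjD, hjub, hjleast⟩ := key S hSD
    exact ⟨j, hjD, hjub, hjleast⟩
  · obtain ⟨m, hmD, hmub, hmleast⟩ :=
      key {u | u ∈ D ∧ ∀ s ∈ S, μ {ω | ∀ q : ℚ≥0, u (q:ℝ≥0) ω ≤ s (q:ℝ≥0) ω} = 1}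
        (fun u hu => hu.1)
    refine ⟨m, hmD, ?_, ?_⟩
    · intro s hsS
      exact hmleast s (hSD hsS) (fun u hu => hu.2 s hsS)
    · intro u huD hu
      exact hmub u ⟨huD, hu⟩
end

section
/- Consider the deterministic sub-probability flow with absorption at a moving barrier: in the McKean-Vlasov problem with loss $L_t = \mathbb{P}(\tau \leq t \mid \mathcal{F}_t)$ and feedback coefficient $\alpha > 0$, if the density $V_t$ of the surviving mass satisfies $\|V_t\|_{L^\infty} \leq 1/\sqrt{2\pi(1-\rho)t}$, then for $t > \alpha^2/(2\pi(1-\rho))$ we have $\|V_t\|_{L^\infty} < \alpha^{-1}$, and hence the jump constraint $\Delta = \alpha\int_0^\Delta V_{t-}(x+s(t-))\,dx$ admits only $\Delta = 0$; i.e., no discontinuities of $s$ can occur after time $\alpha^2/(2\pi(1-\rho))$. -/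
open Real

/-- No discontinuities after time `α²/(2π(1-ρ))`: the density bound
`1/√(2π(1-ρ)t) < α⁻¹` holds iff `t > α²/(2π(1-ρ))`, and if a nonnegative
density `g` is bounded by `M` with `αM < 1`, then the jump constraint
`Δ = α ∫_0^Δ g` admits only `Δ = 0`. -/
theorem stmt11 (ρ α t : ℝ) (hρ : ρ < 1) (hα : 0 < α) (ht : 0 < t) :
    ((1 / Real.sqrt (2 * π * (1 - ρ) * t) < α⁻¹) ↔ t > α ^ 2 / (2 * π * (1 - ρ))) ∧
    (∀ (M Δ : ℝ) (g : ℝ → ℝ), Measurable g → (∀ x, 0 ≤ g x) → (∀ x, g x ≤ M) →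
      α * M < 1 → 0 ≤ Δ → Δ = α * ∫ x in (0:ℝ)..Δ, g x → Δ = 0) := by
  have hc : 0 < 2 * π * (1 - ρ) := by nlinarith [Real.pi_pos]
  constructor
  · have hct : 0 < 2 * π * (1 - ρ) * t := by positivity
    have hs : 0 < Real.sqrt (2 * π * (1 - ρ) * t) := Real.sqrt_pos.2 hct
    rw [one_div, inv_lt_inv₀ hs hα, Real.lt_sqrt hα.le, gt_iff_lt, div_lt_iff₀ hc]
    constructor <;> intro h <;> nlinarith
  · intro M Δ g hg hg0 hgM hαM hΔ hjump
    have hMnn : 0 ≤ M := le_trans (hg0 0) (hgM 0)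
    have hint : IntervalIntegrable g MeasureTheory.volume 0 Δ := by
      rw [intervalIntegrable_iff]
      refine MeasureTheory.Integrable.mono' (g := fun _ => M)
        (MeasureTheory.integrableOn_const measure_Ioc_lt_top.ne)
        hg.aestronglyMeasurable.restrict ?_
      filter_upwards with x
      rw [Real.norm_eq_abs, abs_of_nonneg (hg0 x)]
      exact hgM x
    have hle : (∫ x in (0:ℝ)..Δ, g x) ≤ ∫ x in (0:ℝ)..Δ, M := by
      apply intervalIntegral.integral_mono_on hΔ hint (intervalIntegrable_const)
      intro x _; exact hgM x
    rw [intervalIntegral.integral_const, smul_eq_mul] at hle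
    nlinarith
end
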